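/- Let S be a C-semigroup (a finitely generated submonoid of ℕ^d with H(S) finite) and suppose there exists f ∈ H(S) such that either PF(S) = {f}, or there exists g ∈ ℕ^d with 2g = f and PF(S) = {f, g}. Then S is C-irreducible: whenever S = S₁ ∩ S₂ for finitely generated submonoids S₁, S₂ of ℕ^d with pos(S₁) = pos(S₂) = pos(S), S ⊆ S₁ and S ⊆ S₂, one has S = S₁ or S = S₂. -/

import Mathlib

/-!
If `S < T` and `pos(T) ⊆ pos(S)`, then `T \ S` lies in the finite set `H(S)`, and a pointwise
maximal element of it is pseudo-Frobenius: adding a nonzero `s ∈ S` stays in `T` but leaves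
`T \ S`. So `T` contains `f` or `f/2`, hence `f`. If neither `S₁` nor `S₂` equalled `S`, the gap
`f` would lie in `S₁ ∩ S₂ = S`.
-/

open scoped BigOperators

/-- The natural cast of an element of `ℕ^d` into `ℚ^d`. -/
def toQ {d : ℕ} (x : Fin d → ℕ) : Fin d → ℚ := fun i => (x i : ℚ)

/-- The natural cast of an element of `ℕ^d` into `ℤ^d`. -/
def natToZ {d : ℕ} (x : Fin d → ℕ) : Fin d → ℤ := fun i => (x i : ℤ)

/-- The cone `pos(S)` of a submonoid `S ⊆ ℕ^d`: all nonnegative rational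
combinations of elements of `S`, as a subset of `ℚ^d`. -/
def posCone {d : ℕ} (S : AddSubmonoid (Fin d → ℕ)) : Set (Fin d → ℚ) :=
  {q | ∃ (k : ℕ) (c : Fin k → ℚ) (s : Fin k → (Fin d → ℕ)),
    (∀ i, 0 ≤ c i) ∧ (∀ i, s i ∈ S) ∧ q = ∑ i, c i • toQ (s i)}

/-- The gap set `H(S) = (pos(S) \ S) ∩ ℕ^d`. -/
def gaps {d : ℕ} (S : AddSubmonoid (Fin d → ℕ)) : Set (Fin d → ℕ) :=
  {x | toQ x ∈ posCone S ∧ x ∉ S}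

/-- The set of pseudo-Frobenius elements of `S`. -/
def PF {d : ℕ} (S : AddSubmonoid (Fin d → ℕ)) : Set (Fin d → ℕ) :=
  {a | a ∈ gaps S ∧ ∀ s ∈ S, s ≠ 0 → a + s ∈ S}

/-- A term order on `ℕ^d`: a total order compatible with addition for which
`0` is the least element. -/
def IsTermOrder {d : ℕ} (r : (Fin d → ℕ) → (Fin d → ℕ) → Prop) : Prop :=
  (∀ a b, r a b ∨ r b a) ∧ (∀ a b, r a b → r b a → a = b) ∧
    (∀ a b c, r a b → r b c → r a c) ∧ (∀ a, r 0 a) ∧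
    (∀ a b c, r a b → r (a + c) (b + c))

/-- The set of Frobenius elements of `S`: maxima of `H(S)` for some term order. -/
def FrobSet {d : ℕ} (S : AddSubmonoid (Fin d → ℕ)) : Set (Fin d → ℕ) :=
  {f | f ∈ gaps S ∧ ∃ r, IsTermOrder r ∧ ∀ h ∈ gaps S, r h f}

/-- The Apéry set of `S` relative to `b`:
`Ap(S,b) = {a ∈ S : a - b ∈ pos(S) \ S}`, the difference taken in `ℚ^d`. -/
def Apery {d : ℕ} (S : AddSubmonoid (Fin d → ℕ)) (b : Fin d → ℕ) : Set (Fin d → ℕ) :=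
  {a | a ∈ S ∧ (toQ a - toQ b) ∈ posCone S ∧ ¬ ∃ s ∈ S, toQ s = toQ a - toQ b}

/-- The partial order `≼_S`: `x ≼_S y` iff `y - x ∈ S`. -/
def leS {d : ℕ} (S : AddSubmonoid (Fin d → ℕ)) (x y : Fin d → ℕ) : Prop :=
  ∃ s ∈ S, x + s = y

/-- `a` is a `≼_S`-maximal element of `X`. -/
def MaximalIn {d : ℕ} (S : AddSubmonoid (Fin d → ℕ)) (X : Set (Fin d → ℕ))
    (a : Fin d → ℕ) : Prop :=
  a ∈ X ∧ ∀ a' ∈ X, a' ≠ a → ¬ leS S a a'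

/-- `S` is irreducible: it is not the intersection of two submonoids of `ℕ^d`
each properly containing it. -/
def IrreducibleMonoid {d : ℕ} (S : AddSubmonoid (Fin d → ℕ)) : Prop :=
  ¬ ∃ S₁ S₂ : AddSubmonoid (Fin d → ℕ), S < S₁ ∧ S < S₂ ∧
    (S : Set (Fin d → ℕ)) = (S₁ : Set (Fin d → ℕ)) ∩ (S₂ : Set (Fin d → ℕ))

/-- The multiplicity of `S`: componentwise infimum of `S \ {0}`. -/
noncomputable def mult {d : ℕ} (S : AddSubmonoid (Fin d → ℕ)) : Fin d → ℕ :=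
  fun i => sInf {n | ∃ s ∈ S, s ≠ 0 ∧ s i = n}

/-- `S` is a PI-monoid: `S = (a + T) ∪ {0}` for some submonoid `T` of `ℕ^d`
and some `a ∈ T \ {0}`. -/
def IsPIMonoid {d : ℕ} (S : AddSubmonoid (Fin d → ℕ)) : Prop :=
  ∃ (T : AddSubmonoid (Fin d → ℕ)) (a : Fin d → ℕ), a ∈ T ∧ a ≠ 0 ∧
    (S : Set (Fin d → ℕ)) = {x | ∃ t ∈ T, x = a + t} ∪ {0}

/-- `G` is a minimal system of generators of `S`. -/
def IsMinimalGenSet {d : ℕ} (S : AddSubmonoid (Fin d → ℕ)) (G : Set (Fin d → ℕ)) : Prop :=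
  AddSubmonoid.closure G = S ∧ ∀ G' ⊂ G, AddSubmonoid.closure G' ≠ S

lemma toQ_mem_posCone {d : ℕ} {S : AddSubmonoid (Fin d → ℕ)} {x : Fin d → ℕ}
    (hx : x ∈ S) : toQ x ∈ posCone S :=
  ⟨1, fun _ => 1, fun _ => x, fun _ => zero_le_one, fun _ => hx, by simp⟩

lemma diff_subset_gaps {d : ℕ} {S T : AddSubmonoid (Fin d → ℕ)}
    (hpos : posCone T ⊆ posCone S) : (T : Set (Fin d → ℕ)) \ S ⊆ gaps S :=
  fun _ ⟨hxT, hxS⟩ => ⟨hpos (toQ_mem_posCone hxT), hxS⟩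

lemma exists_mem_PF_mem_of_lt {d : ℕ} {S T : AddSubmonoid (Fin d → ℕ)}
    (hfin : (gaps S).Finite) (hpos : posCone T ⊆ posCone S) (hlt : S < T) :
    ∃ x ∈ PF S, x ∈ T := by
  obtain ⟨a, ha⟩ := (hfin.subset (diff_subset_gaps hpos)).exists_maximal
    (Set.sdiff_nonempty.mpr fun h => hlt.not_ge h)
  refine ⟨a, ⟨diff_subset_gaps hpos ha.prop, fun s hs hs0 => ?_⟩, ha.prop.1⟩
  by_contra has
  have hle : a + s ≤ a := ha.2 ⟨T.add_mem ha.prop.1 (hlt.le hs), has⟩ le_self_add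
  exact hs0 (nonpos_iff_eq_zero.mp ((add_le_iff_nonpos_right a).mp hle))

lemma mem_of_lt_of_forall_mem_PF {d : ℕ} {S T : AddSubmonoid (Fin d → ℕ)} {f : Fin d → ℕ}
    (hfin : (gaps S).Finite) (hPF : ∀ x ∈ PF S, x = f ∨ x + x = f)
    (hpos : posCone T ⊆ posCone S) (hlt : S < T) : f ∈ T := by
  obtain ⟨x, hxPF, hxT⟩ := exists_mem_PF_mem_of_lt hfin hpos hlt
  rcases hPF x hxPF with rfl | hx
  · exact hxT
  · exact hx ▸ T.add_mem hxT hxT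

theorem c_irreducible_of_pf_general {d : ℕ} (S : AddSubmonoid (Fin d → ℕ))
    (hfin : (gaps S).Finite) (f : Fin d → ℕ)
    (hpf : PF S = {f} ∨ ∃ g : Fin d → ℕ, g + g = f ∧ PF S = {f, g}) :
    ∀ S₁ S₂ : AddSubmonoid (Fin d → ℕ), S₁.FG → S₂.FG →
      posCone S₁ = posCone S → posCone S₂ = posCone S →
      S ≤ S₁ → S ≤ S₂ →
      (S : Set (Fin d → ℕ)) = (S₁ : Set (Fin d → ℕ)) ∩ (S₂ : Set (Fin d → ℕ)) →
      S = S₁ ∨ S = S₂ := by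
  intro S₁ S₂ _ _ hpos₁ hpos₂ hle₁ hle₂ hinter
  have hfPF : f ∈ PF S := by
    rcases hpf with h | ⟨g, -, h⟩ <;> simp [h]
  have hPF : ∀ x ∈ PF S, x = f ∨ x + x = f := by
    rcases hpf with h | ⟨g, hg, h⟩ <;> simp_all
  by_contra! hne
  have hf₁ := mem_of_lt_of_forall_mem_PF hfin hPF hpos₁.le (lt_of_le_of_ne hle₁ hne.1)
  have hf₂ := mem_of_lt_of_forall_mem_PF hfin hPF hpos₂.le (lt_of_le_of_ne hle₂ hne.2)
  exact hfPF.1.2 (hinter ▸ ⟨hf₁, hf₂⟩ : f ∈ (S : Set (Fin d → ℕ)))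

/-- A C-semigroup `S` with `PF(S) = {f}` or `PF(S) = {f, f/2}`
for some `f ∈ H(S)` is C-irreducible. -/
theorem c_irreducible_of_pf {d : ℕ} (S : AddSubmonoid (Fin d → ℕ)) (hfg : S.FG)
    (hfin : (gaps S).Finite) (f : Fin d → ℕ) (hfH : f ∈ gaps S)
    (hpf : PF S = {f} ∨ ∃ g : Fin d → ℕ, g + g = f ∧ PF S = {f, g}) :
    ∀ S₁ S₂ : AddSubmonoid (Fin d → ℕ), S₁.FG → S₂.FG →
      posCone S₁ = posCone S → posCone S₂ = posCone S →
      S ≤ S₁ → S ≤ S₂ →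
      (S : Set (Fin d → ℕ)) = (S₁ : Set (Fin d → ℕ)) ∩ (S₂ : Set (Fin d → ℕ)) →
      S = S₁ ∨ S = S₂ :=
  c_irreducible_of_pf_general S hfin f hpf
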